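/- arXiv:1511.04482 — 9 statements merged into one kernel-verified Lean document; each statement's English description precedes it below -/
import Mathlib

section
/- Let (a,b,x) and (a',b',x') be coin types with a < b, a' < b', x > 0, x' > 0, and with (a,b,x) lexicographically smaller than (a',b',x'). Then the coin (a,b,x) dominates the coin (a',b',x') if and only if exactly one of the following four conditions is satisfied: (1) a = a' < b < b' and 1/x' > 1/x + 1; (2) a < a' < b' < b and x > 1; (3) a < a' < b = b' and x > x' + 1; (4) a < a' < b < b' and (1/x + 1)(x' + 1) < 2. -/
open Finset

/-- The probability that coin `(a,b,x)` displays a strictly larger number than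
coin `(a',b',x')`, when both are flipped independently. -/
noncomputable def winProb (a b x a' b' x' : ℝ) : ℝ :=
  (1 / (1 + x)) * (1 / (1 + x')) * (if a' < a then 1 else 0)
  + (1 / (1 + x)) * (x' / (1 + x')) * (if b' < a then 1 else 0)
  + (x / (1 + x)) * (1 / (1 + x')) * (if a' < b then 1 else 0)
  + (x / (1 + x)) * (x' / (1 + x')) * (if b' < b then 1 else 0)

/-- Coin `(a,b,x)` dominates coin `(a',b',x')`: it is more likely to display the
strictly larger number. -/
def Dominates (a b x a' b' x' : ℝ) : Prop :=
  winProb a' b' x' a b x < winProb a b x a' b' x'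

/-- A tournament: irreflexive, and for distinct vertices exactly one of the two
directed edges is present. -/
def IsTournament {V : Type*} (R : V → V → Prop) : Prop :=
  (∀ v, ¬ R v v) ∧ ∀ u v : V, u ≠ v → (R u v ↔ ¬ R v u)

/-- A directed cycle `c 0 → c 1 → ⋯ → c (m-1) → c 0` in the digraph `R`:
the vertices are distinct and consecutive ones (cyclically) are joined by edges. -/
def IsCycle {V : Type*} (R : V → V → Prop) {m : ℕ} (c : Fin (m + 1) → V) : Prop :=
  Function.Injective c ∧ ∀ i : Fin (m + 1), R (c i) (c (i + 1))

/-- A cycle on linearly ordered vertices is ascending if it has at least as many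
ascents as descents. -/
def IsAscendingCycle {α : Type*} [LinearOrder α] {m : ℕ} (c : Fin (m + 1) → α) : Prop :=
  (univ.filter (fun i : Fin (m + 1) => c (i + 1) < c i)).card ≤
    (univ.filter (fun i : Fin (m + 1) => c i < c (i + 1))).card

/-- A digraph on a linearly ordered vertex set is semiacyclic if it contains no
ascending directed cycle. -/
def Semiacyclic {α : Type*} [LinearOrder α] (R : α → α → Prop) : Prop :=
  ∀ (m : ℕ) (c : Fin (m + 1) → α), IsCycle R c → ¬ IsAscendingCycle c

/-- Lexicographic order on coin types. -/
def TypeLt (a b x a' b' x' : ℝ) : Prop :=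
  a < a' ∨ (a = a' ∧ b < b') ∨ (a = a' ∧ b = b' ∧ x < x')

/-- The 3-cycle tournament on `{0,1,2}` with `0 → 1`, `1 → 2`, `2 → 0`. -/
def C3 (u v : Fin 3) : Prop := v = u + 1

/-- The direct product of two tournaments. -/
def TournProd {V₁ V₂ : Type*} (R₁ : V₁ → V₁ → Prop) (R₂ : V₂ → V₂ → Prop)
    (u v : V₁ × V₂) : Prop :=
  R₁ u.1 v.1 ∨ (u.1 = v.1 ∧ R₂ u.2 v.2)

/-- Exactly one of four propositions holds. -/
def ExactlyOne (P Q R S : Prop) : Prop :=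
  (P ∧ ¬Q ∧ ¬R ∧ ¬S) ∨ (¬P ∧ Q ∧ ¬R ∧ ¬S) ∨ (¬P ∧ ¬Q ∧ R ∧ ¬S) ∨ (¬P ∧ ¬Q ∧ ¬R ∧ S)

/-!
Multiplying both winning probabilities by the common denominator `(1 + x) * (1 + x')`, a coin
dominates another iff its weight `winWeight` exceeds the opponent's, and each weight is a sum of
the monomials `1, x', x, x * x'` selected by the order relations between the faces. A
lexicographically smaller coin faces its opponent in one of six configurations of the faces; in two
of them it cannot win, and in each of the other four the comparison of the weights is one of the
four inequalities of the statement.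
-/

theorem exactlyOne_iff_or {P Q R S : Prop} (hPQ : ¬(P ∧ Q)) (hPR : ¬(P ∧ R)) (hPS : ¬(P ∧ S))
    (hQR : ¬(Q ∧ R)) (hQS : ¬(Q ∧ S)) (hRS : ¬(R ∧ S)) :
    ExactlyOne P Q R S ↔ P ∨ Q ∨ R ∨ S := by
  unfold ExactlyOne
  grind

noncomputable def winWeight (a b x a' b' x' : ℝ) : ℝ :=
  (if a' < a then 1 else 0) + x' * (if b' < a then 1 else 0)
  + x * (if a' < b then 1 else 0) + x * x' * (if b' < b then 1 else 0)

section CoinDominance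

variable {a b x a' b' x' : ℝ}

theorem winProb_eq_winWeight_div (hx : 1 + x ≠ 0) (hx' : 1 + x' ≠ 0) :
    winProb a b x a' b' x' = winWeight a b x a' b' x' / ((1 + x) * (1 + x')) := by
  rw [eq_div_iff (mul_ne_zero hx hx'), winProb, winWeight]
  field_simp

theorem dominates_iff_winWeight_lt (hx : 0 < 1 + x) (hx' : 0 < 1 + x') :
    Dominates a b x a' b' x' ↔ winWeight a' b' x' a b x < winWeight a b x a' b' x' := by
  rw [Dominates, winProb_eq_winWeight_div hx.ne' hx'.ne', winProb_eq_winWeight_div hx'.ne' hx.ne',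
    mul_comm (1 + x'), div_lt_div_iff_of_pos_right (mul_pos hx hx')]

theorem winWeight_nonneg (hx : 0 ≤ x) (hx' : 0 ≤ x') : 0 ≤ winWeight a b x a' b' x' := by
  unfold winWeight
  split_ifs <;> positivity

theorem not_dominates_of_separated (hx : 0 < x) (hx' : 0 < x') (ha : a < a') (hb : b ≤ a')
    (hab' : a' < b') : ¬ Dominates a b x a' b' x' := by
  have hzero : winWeight a b x a' b' x' = 0 := by
    simp [winWeight, hb.not_gt, ha.not_gt, (ha.trans hab').not_gt, (hb.trans hab'.le).not_gt]
  rw [dominates_iff_winWeight_lt (by linarith) (by linarith), hzero, not_lt]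
  exact winWeight_nonneg hx'.le hx.le

theorem not_dominates_of_eq_of_eq (hx : 0 < x) (hab : a < b) (hxx' : x < x') :
    ¬ Dominates a b x a b x' := by
  rw [dominates_iff_winWeight_lt (by linarith) (by linarith)]
  simp only [winWeight, if_pos hab, lt_irrefl, if_false, if_neg hab.not_gt]
  linarith

theorem dominates_iff_of_eq_left (hx : 0 < x) (hx' : 0 < x') (hab : a < b) (hb : b < b') :
    Dominates a b x a b' x' ↔ 1 / x + 1 < 1 / x' := by
  rw [dominates_iff_winWeight_lt (by linarith) (by linarith)]
  simp only [winWeight, if_pos hab, if_pos (hab.trans hb), if_pos hb, lt_irrefl, if_false,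
    if_neg hab.not_gt, if_neg (hab.trans hb).not_gt, if_neg hb.not_gt]
  rw [div_add_one hx.ne', div_lt_div_iff₀ hx hx']
  constructor <;> intro h <;> linarith

theorem dominates_iff_of_nested (hx : 0 < x) (hx' : 0 < x') (ha : a < a') (hab' : a' < b')
    (hb : b' < b) : Dominates a b x a' b' x' ↔ 1 < x := by
  rw [dominates_iff_winWeight_lt (by linarith) (by linarith)]
  simp only [winWeight, if_pos ha, if_pos (ha.trans hab'), if_pos (hab'.trans hb), if_pos hb,
    if_neg ha.not_gt, if_neg (ha.trans hab').not_gt, if_neg (hab'.trans hb).not_gt,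
    if_neg hb.not_gt]
  constructor <;> intro h <;> nlinarith

theorem dominates_iff_of_eq_right (hx : 0 < x) (hx' : 0 < x') (ha : a < a') (hab : a' < b) :
    Dominates a b x a' b x' ↔ x' + 1 < x := by
  rw [dominates_iff_winWeight_lt (by linarith) (by linarith)]
  simp only [winWeight, if_pos ha, if_pos (ha.trans hab), if_pos hab, lt_irrefl, if_false,
    if_neg ha.not_gt, if_neg (ha.trans hab).not_gt, if_neg hab.not_gt]
  constructor <;> intro h <;> linarith

theorem dominates_iff_of_interlaced (hx : 0 < x) (hx' : 0 < x') (ha : a < a') (hab : a' < b)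
    (hb : b < b') : Dominates a b x a' b' x' ↔ (1 / x + 1) * (x' + 1) < 2 := by
  rw [dominates_iff_winWeight_lt (by linarith) (by linarith)]
  simp only [winWeight, if_pos ha, if_pos (ha.trans (hab.trans hb)), if_pos hab, if_pos hb,
    if_neg ha.not_gt, if_neg (ha.trans (hab.trans hb)).not_gt, if_neg hab.not_gt,
    if_neg hb.not_gt]
  rw [div_add_one hx.ne', div_mul_eq_mul_div, div_lt_iff₀ hx]
  constructor <;> intro h <;> linarith

end CoinDominance

/-- Characterization of dominance for lexicographically ordered types. -/
theorem stmt1 (a b x a' b' x' : ℝ) (hab : a < b) (hab' : a' < b')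
    (hx : 0 < x) (hx' : 0 < x') (hlex : TypeLt a b x a' b' x') :
    Dominates a b x a' b' x' ↔
      ExactlyOne
        (a = a' ∧ a' < b ∧ b < b' ∧ 1 / x + 1 < 1 / x')
        (a < a' ∧ a' < b' ∧ b' < b ∧ 1 < x)
        (a < a' ∧ a' < b ∧ b = b' ∧ x' + 1 < x)
        (a < a' ∧ a' < b ∧ b < b' ∧ (1 / x + 1) * (x' + 1) < 2) := by
  -- the conditions disagree on `a = a'` or on how `b` compares with `b'`
  rw [exactlyOne_iff_or (by grind) (by grind) (by grind) (by grind) (by grind) (by grind)]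
  rcases hlex with ha | ⟨rfl, hb⟩ | ⟨rfl, rfl, hxx'⟩
  · rcases le_or_gt b a' with hba' | ha'b
    · simp only [not_dominates_of_separated hx hx' ha hba' hab', false_iff]
      grind
    rcases lt_trichotomy b' b with hb | rfl | hb
    · grind [dominates_iff_of_nested hx hx' ha hab' hb]
    · grind [dominates_iff_of_eq_right hx hx' ha ha'b]
    · grind [dominates_iff_of_interlaced hx hx' ha ha'b hb]
  · grind [dominates_iff_of_eq_left hx hx' hab hb]
  · grind [not_dominates_of_eq_of_eq hx hab hxx']
end

section
/- Let (a,b,x) and (a',b',x') be coin types with x > 0, x' > 0 and a = a' < b < b'. Then the coin (a,b,x) dominates the coin (a',b',x') if and only if 1/x' > 1/x + 1. -/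
open Finset

/-!
When both coins share the low face, the coin with the higher high face `b'` wins exactly when it
shows `b'`, with probability `x' / (1 + x')`, while the other wins only on the outcome `(b, a)`,
with probability `x / ((1 + x) (1 + x'))`. Dominance is therefore `x' (1 + x) < x`, which for
positive `x, x'` is the inequality `1/x + 1 < 1/x'`.
-/

lemma winProb_common_low_of_high_lt {a b b' x x' : ℝ} (hab : a ≤ b) (hbb' : b < b')
    (hx : 1 + x ≠ 0) :
    winProb a b' x' a b x = x' / (1 + x') := by
  simp only [winProb, lt_irrefl, not_lt.mpr hab, hab.trans_lt hbb', hbb', if_true, if_false]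
  field_simp
  ring

lemma winProb_common_low_of_le_high {a b b' x x' : ℝ} (hab : a < b) (hbb' : b ≤ b') :
    winProb a b x a b' x' = x / (1 + x) * (1 / (1 + x')) := by
  simp only [winProb, lt_irrefl, not_lt.mpr (hab.le.trans hbb'), not_lt.mpr hbb', hab,
    if_true, if_false]
  ring

lemma dominates_common_low_iff {a b b' x x' : ℝ} (hab : a < b) (hbb' : b < b')
    (hx : 0 < 1 + x) (hx' : 0 < 1 + x') :
    Dominates a b x a b' x' ↔ x' * (1 + x) < x := by
  rw [Dominates, winProb_common_low_of_high_lt hab.le hbb' hx.ne',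
    winProb_common_low_of_le_high hab hbb'.le, mul_one_div,
    div_lt_div_iff_of_pos_right hx', lt_div_iff₀ hx]

lemma one_div_add_one_lt_one_div_iff {x x' : ℝ} (hx : 0 < x) (hx' : 0 < x') :
    1 / x + 1 < 1 / x' ↔ x' * (1 + x) < x := by
  rw [lt_one_div (by positivity) hx', div_add_one hx.ne', one_div_div,
    lt_div_iff₀ (by positivity), add_comm]

/-- For types with `a = a' < b < b'`, dominance holds iff `1/x' > 1/x + 1`. -/
theorem stmt2 (a b x a' b' x' : ℝ) (hx : 0 < x) (hx' : 0 < x')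
    (h1 : a = a') (h2 : a' < b) (h3 : b < b') :
    Dominates a b x a' b' x' ↔ 1 / x + 1 < 1 / x' := by
  subst h1
  rw [dominates_common_low_iff h2 h3 (by positivity) (by positivity),
    one_div_add_one_lt_one_div_iff hx hx']
end

section
/- Let (a,b,x) and (a',b',x') be coin types with x > 0, x' > 0 and a < a' < b < b'. Then the coin (a,b,x) dominates the coin (a',b',x') if and only if (1/x + 1)(x' + 1) < 2. -/
open Finset

/-!
When `a < a' < b < b'`, the coin `(a,b,x)` wins exactly when it shows `b` and the other shows
`a'`, while `(a',b',x')` wins in all three remaining outcomes. Over the common denominator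
`(1+x)(1+x')` dominance becomes `1 + x' + x x' < x`, that is `(1+x)(1+x') < 2x`.
-/

section Interleaved

variable {a b x a' b' x' : ℝ}

theorem winProb_interleaved (h1 : a < a') (h2 : a' < b) (h3 : b < b') :
    winProb a b x a' b' x' = x / ((1 + x) * (1 + x')) := by
  rw [winProb, if_neg h1.not_gt, if_neg (h1.trans (h2.trans h3)).not_gt, if_pos h2,
    if_neg h3.not_gt]
  simp only [div_eq_mul_inv, mul_inv]
  ring

theorem winProb_interleaved_swap (h1 : a < a') (h2 : a' < b) (h3 : b < b') :
    winProb a' b' x' a b x = (1 + x' + x * x') / ((1 + x) * (1 + x')) := by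
  rw [winProb, if_pos h1, if_neg h2.not_gt, if_pos (h1.trans (h2.trans h3)), if_pos h3]
  simp only [div_eq_mul_inv, mul_inv]
  ring

theorem dominates_interleaved_iff (hx : 0 < 1 + x) (hx' : 0 < 1 + x')
    (h1 : a < a') (h2 : a' < b) (h3 : b < b') :
    Dominates a b x a' b' x' ↔ 1 + x' + x * x' < x := by
  rw [Dominates, winProb_interleaved h1 h2 h3, winProb_interleaved_swap h1 h2 h3]
  exact div_lt_div_iff_of_pos_right (mul_pos hx hx')

end Interleaved

/-- For types with `a < a' < b < b'`, dominance holds iff `(1/x + 1)(x' + 1) < 2`. -/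
theorem stmt3 (a b x a' b' x' : ℝ) (hx : 0 < x) (hx' : 0 < x')
    (h1 : a < a') (h2 : a' < b) (h3 : b < b') :
    Dominates a b x a' b' x' ↔ (1 / x + 1) * (x' + 1) < 2 := by
  have hprod : (1 / x + 1) * (x' + 1) = (1 + x) * (1 + x') / x := by
    field_simp
    ring
  rw [dominates_interleaved_iff (by linarith) (by linarith) h1 h2 h3, hprod, div_lt_iff₀ hx]
  constructor <;> intro h <;> linarith
end

section
/- Let (a_i,b_i,x_i) and (a_j,b_j,x_j) be coin types with a_i ≤ b_i, a_j ≤ b_j, x_i > 0 and x_j ≥ 1. If the coin (a_i,b_i,x_i) dominates the coin (a_j,b_j,x_j), then b_i ≥ b_j. -/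
open Finset

/-! If `bi < bj`, coin `i` beats coin `j` only when `j` shows `aj`, which happens with probability
`1/(1+xj) ≤ 1/2`, while `j` beats `i` whenever it shows `bj`, with probability `xj/(1+xj) ≥ 1/2`. -/

lemma one_div_add_div_eq_one {x : ℝ} (hx : 1 + x ≠ 0) : 1 / (1 + x) + x / (1 + x) = 1 := by
  rw [← add_div, div_self hx]

lemma winProb_le_of_lt {a b x a' b' x' : ℝ} (hab : a ≤ b) (hbb' : b < b') (hx : 0 ≤ x)
    (hx' : 0 ≤ x') : winProb a b x a' b' x' ≤ 1 / (1 + x') := by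
  have hsplit := one_div_add_div_eq_one (by positivity : 1 + x ≠ 0)
  unfold winProb
  rw [if_neg (hab.trans_lt hbb').not_gt, if_neg hbb'.not_gt, mul_zero, mul_zero, add_zero, add_zero]
  calc _ ≤ 1 / (1 + x) * (1 / (1 + x')) * 1 + x / (1 + x) * (1 / (1 + x')) * 1 := by
        gcongr <;> exact ite_le_one le_rfl zero_le_one
    _ = 1 / (1 + x') := by linear_combination (1 / (1 + x')) * hsplit

lemma le_winProb_of_lt {a b x a' b' x' : ℝ} (hab : a ≤ b) (hbb' : b < b') (hx : 0 ≤ x)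
    (hx' : 0 ≤ x') : x' / (1 + x') ≤ winProb a' b' x' a b x := by
  have hsplit := one_div_add_div_eq_one (by positivity : 1 + x ≠ 0)
  unfold winProb
  rw [if_pos (hab.trans_lt hbb'), if_pos hbb']
  calc x' / (1 + x') = x' / (1 + x') * (1 / (1 + x)) * 1 + x' / (1 + x') * (x / (1 + x)) * 1 := by
        linear_combination -(x' / (1 + x')) * hsplit
    _ ≤ _ := by
        rw [add_assoc]
        exact le_add_of_nonneg_left (by positivity)

theorem stmt4_general (ai bi xi aj bj xj : ℝ) (hi : ai ≤ bi)
    (hxi : 0 < xi) (hxj : 1 ≤ xj)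
    (hdom : Dominates ai bi xi aj bj xj) : bj ≤ bi := by
  by_contra! hlt
  have hxj₀ : 0 ≤ xj := zero_le_one.trans hxj
  have hj_wins : winProb ai bi xi aj bj xj ≤ winProb aj bj xj ai bi xi :=
    calc winProb ai bi xi aj bj xj ≤ 1 / (1 + xj) := winProb_le_of_lt hi hlt hxi.le hxj₀
      _ ≤ xj / (1 + xj) := by gcongr
      _ ≤ winProb aj bj xj ai bi xi := le_winProb_of_lt hi hlt hxi.le hxj₀
  exact hj_wins.not_gt hdom

/-- If coin `i` dominates coin `j` and coin `j` is not a loser coin,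
then `b i ≥ b j`. -/
theorem stmt4 (ai bi xi aj bj xj : ℝ) (hi : ai ≤ bi) (hj : aj ≤ bj)
    (hxi : 0 < xi) (hxj : 1 ≤ xj)
    (hdom : Dominates ai bi xi aj bj xj) : bj ≤ bi :=
  stmt4_general ai bi xi aj bj xj hi hxi hxj hdom
end

section
/- Let c_1, …, c_n be coins with types (a_i, b_i, x_i) satisfying a_i < b_i and x_i ≥ 1 for all i (i.e., no loser coins), listed so that the types are in strictly increasing lexicographic order. If the dominance graph of these coins is a tournament on {1, …, n}, then this tournament is semiacyclic. -/
/-!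
Without loser coins, `u → v` in the dominance graph forces `b v ≤ b u`, so `b` is constant
along any directed cycle. Among coins with a common `b`, an edge `u → v` forces
`x v < x u + 1`, and `x v < x u - 1` when `u` precedes `v` lexicographically. Summing around a
cycle, the total change of `x`, which is zero, is less than the number of descents minus the
number of ascents, so every cycle has more descents than ascents.
-/

open Finset

theorem Real.sign_le_one (r : ℝ) : Real.sign r ≤ 1 := by
  rcases Real.sign_apply_eq r with h | h | h <;> rw [h] <;> norm_num

theorem ite_lt_sub_ite_lt (u v : ℝ) :
    ((if v < u then 1 else 0) - if u < v then 1 else 0 : ℝ) = Real.sign (u - v) := by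
  rcases lt_trichotomy u v with h | rfl | h
  · rw [if_neg h.not_gt, if_pos h, Real.sign_of_neg (sub_neg.2 h)]; norm_num
  · simp [Real.sign_zero]
  · rw [if_pos h, if_neg h.not_gt, Real.sign_of_pos (sub_pos.2 h)]; norm_num

theorem winProb_sub_winProb {a b x a' b' x' : ℝ} (hx : 0 ≤ x) (hx' : 0 ≤ x') :
    winProb a b x a' b' x' - winProb a' b' x' a b x =
      (Real.sign (a - a') + x' * Real.sign (a - b') + x * Real.sign (b - a')
        + x * x' * Real.sign (b - b')) / ((1 + x) * (1 + x')) := by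
  simp only [winProb, ← ite_lt_sub_ite_lt]
  field_simp
  ring

theorem dominates_iff {a b x a' b' x' : ℝ} (hx : 0 ≤ x) (hx' : 0 ≤ x') :
    Dominates a b x a' b' x' ↔ 0 < Real.sign (a - a') + x' * Real.sign (a - b')
      + x * Real.sign (b - a') + x * x' * Real.sign (b - b') := by
  rw [Dominates, ← sub_pos, winProb_sub_winProb hx hx', div_pos_iff_of_pos_right (by positivity)]

theorem not_dominates_of_lt {a b x a' b' x' : ℝ} (hab : a < b) (hx : 0 ≤ x) (hx' : 1 ≤ x')
    (hbb' : b < b') : ¬ Dominates a b x a' b' x' := by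
  rw [dominates_iff hx (by linarith), Real.sign_of_neg (by linarith : a - b' < 0),
    Real.sign_of_neg (sub_neg.2 hbb'), not_lt]
  nlinarith [Real.sign_le_one (a - a'), Real.sign_le_one (b - a')]

theorem dominates_iff_of_eq {a b x a' x' : ℝ} (hab : a < b) (hab' : a' < b) (hx : 0 ≤ x)
    (hx' : 0 ≤ x') : Dominates a b x a' b x' ↔ x' < x + Real.sign (a - a') := by
  rw [dominates_iff hx hx', Real.sign_of_neg (sub_neg.2 hab), Real.sign_of_pos (sub_pos.2 hab'),
    sub_self, Real.sign_zero]
  constructor <;> intro h <;> linarith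

theorem not_dominates_self (a b x : ℝ) : ¬ Dominates a b x a b x := lt_irrefl _

theorem lt_add_one_of_dominates {a b x a' x' : ℝ} (hab : a < b) (hab' : a' < b) (hx : 0 ≤ x)
    (hx' : 0 ≤ x') (hdom : Dominates a b x a' b x') : x' < x + 1 := by
  linarith [(dominates_iff_of_eq hab hab' hx hx').1 hdom, Real.sign_le_one (a - a')]

theorem add_one_lt_of_dominates_of_typeLt {a b x a' x' : ℝ} (hab : a < b) (hab' : a' < b)
    (hx : 0 ≤ x) (hx' : 0 ≤ x') (hlt : TypeLt a b x a' b x') (hdom : Dominates a b x a' b x') :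
    x' + 1 < x := by
  have hstep := (dominates_iff_of_eq hab hab' hx hx').1 hdom
  rcases hlt with ha | ⟨-, hb⟩ | ⟨ha, -, hxx'⟩
  · rw [Real.sign_of_neg (sub_neg.2 ha)] at hstep; linarith
  · exact absurd hb (lt_irrefl b)
  · rw [ha, sub_self, Real.sign_zero] at hstep; linarith

theorem Fin.eq_of_forall_add_one_le {M : Type*} [AddCommMonoid M] [PartialOrder M]
    [IsOrderedCancelAddMonoid M] {m : ℕ} {g : Fin (m + 1) → M} (h : ∀ i, g (i + 1) ≤ g i)
    (i : Fin (m + 1)) : g (i + 1) = g i := by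
  have hsum : ∑ j, g (j + 1) = ∑ j, g j := Equiv.sum_comp (Equiv.addRight 1) g
  exact (Finset.sum_eq_sum_iff_of_le fun j _ => h j).1 hsum i (Finset.mem_univ i)

theorem not_isAscendingCycle_of_potential {α : Type*} [LinearOrder α] {m : ℕ}
    {c : Fin (m + 1) → α} (f : α → ℝ)
    (hf : ∀ i, f (c (i + 1)) + (if c i < c (i + 1) then 1 else 0)
      < f (c i) + (if c (i + 1) < c i then 1 else 0)) :
    ¬ IsAscendingCycle c := by
  intro hasc
  have hsum : ∑ i, f (c (i + 1)) = ∑ i, f (c i) := Equiv.sum_comp (Equiv.addRight 1) (f ∘ c)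
  have := Finset.sum_lt_sum_of_nonempty Finset.univ_nonempty fun i _ => hf i
  simp only [Finset.sum_add_distrib, Finset.sum_boole, hsum] at this
  have hcard : (_ : ℝ) ≤ _ := Nat.cast_le.2 hasc
  linarith

theorem stmt6_general {n : ℕ} (a b x : Fin n → ℝ)
    (hcoin : ∀ i, a i < b i ∧ 1 ≤ x i)
    (hlex : ∀ i j : Fin n, i < j →
      TypeLt (a i) (b i) (x i) (a j) (b j) (x j)) :
    Semiacyclic
      (fun i j : Fin n => Dominates (a i) (b i) (x i) (a j) (b j) (x j)) := by
  intro m c ⟨_, hedge⟩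
  have hx : ∀ i, 0 ≤ x i := fun i => zero_le_one.trans (hcoin i).2
  have hb : ∀ i, b (c (i + 1)) = b (c i) := Fin.eq_of_forall_add_one_le fun i =>
    le_of_not_gt fun h => not_dominates_of_lt (hcoin _).1 (hx _) (hcoin _).2 h (hedge i)
  refine not_isAscendingCycle_of_potential x fun i => ?_
  have hdom :
      Dominates (a (c i)) (b (c i)) (x (c i)) (a (c (i + 1))) (b (c i)) (x (c (i + 1))) := by
    simpa only [hb i] using hedge i
  have hab' : a (c (i + 1)) < b (c i) := hb i ▸ (hcoin _).1
  rcases lt_trichotomy (c i) (c (i + 1)) with hlt | heq | hgt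
  · have hlex' : TypeLt _ _ _ _ (b (c i)) _ := hb i ▸ hlex _ _ hlt
    rw [if_pos hlt, if_neg hlt.not_gt]
    linarith [add_one_lt_of_dominates_of_typeLt (hcoin _).1 hab' (hx _) (hx _) hlex' hdom]
  · exact absurd (heq ▸ hedge i) (not_dominates_self _ _ _)
  · rw [if_neg hgt.not_gt, if_pos hgt]
    linarith [lt_add_one_of_dominates (hcoin _).1 hab' (hx _) (hx _) hdom]

/-- A set of winner and fair coins listed in increasing lexicographic order of
their types whose dominance graph is a tournament yields a semiacyclic tournament. -/
theorem stmt6 {n : ℕ} (a b x : Fin n → ℝ)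
    (hcoin : ∀ i, a i < b i ∧ 1 ≤ x i)
    (hlex : ∀ i j : Fin n, i < j →
      TypeLt (a i) (b i) (x i) (a j) (b j) (x j))
    (htour : IsTournament
      (fun i j : Fin n => Dominates (a i) (b i) (x i) (a j) (b j) (x j))) :
    Semiacyclic
      (fun i j : Fin n => Dominates (a i) (b i) (x i) (a j) (b j) (x j)) :=
  stmt6_general a b x hcoin hlex
end

section
/- Every semiacyclic tournament T on {1, …, n} is the dominance graph of a set of n winner coins; that is, there exist coins c_1, …, c_n with types (a_i, b_i, x_i) satisfying a_i < b_i and x_i > 1 for all i, such that for all distinct i, j ∈ {1,…,n}, coin c_i dominates coin c_j if and only if i → j holds in T. -/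
open Finset

/-!
Give coin `i` the type `(i, n, x i)`. All coins share the top value `n`, so for `i < j` coin `i`
dominates coin `j` exactly when `x j + 1 < x i`, and coin `j` dominates coin `i` exactly when
`x i < x j + 1`. Perturbing the weights `∓1` by `-ε`, with `ε = 1/(n+1)`, turns these strict
conditions into difference constraints `x v ≤ x u + w u v` along the edges `u → v`. Such a
system is solvable (take `x v` to be the least weight of a simple path ending at `v`) as soon as
no cycle has negative weight, and by semiacyclicity a cycle weighs
`#descents - #ascents - ε · length ≥ 1 - n ε > 0`.
-/

variable {V : Type*}

def pathWeight (w : V → V → ℝ) : List V → ℝ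
  | [] => 0
  | [_] => 0
  | a :: b :: l => w a b + pathWeight w (b :: l)

section PathWeight

variable (w : V → V → ℝ)

@[simp] lemma pathWeight_nil : pathWeight w [] = 0 := rfl

@[simp] lemma pathWeight_singleton (a : V) : pathWeight w [a] = 0 := rfl

@[simp] lemma pathWeight_cons_cons (a b : V) (l : List V) :
    pathWeight w (a :: b :: l) = w a b + pathWeight w (b :: l) := rfl

lemma pathWeight_append_cons : ∀ (l : List V) (v : V) (l' : List V),
    pathWeight w (l ++ v :: l') = pathWeight w (l ++ [v]) + pathWeight w (v :: l')
  | [], _, _ => by simp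
  | [_], _, _ => by
    simp only [List.cons_append, List.nil_append, pathWeight_cons_cons, pathWeight_singleton]
    ring
  | a :: b :: l, v, l' => by
    have ih := pathWeight_append_cons (b :: l) v l'
    simp only [List.cons_append, pathWeight_cons_cons] at ih ⊢
    rw [ih]
    ring

lemma pathWeight_append_singleton {l : List V} {u : V} (hl : l.getLast? = some u) (v : V) :
    pathWeight w (l ++ [v]) = pathWeight w l + w u v := by
  obtain ⟨l, rfl⟩ := List.getLast?_eq_some_iff.1 hl
  rw [List.append_assoc, List.singleton_append, pathWeight_append_cons]
  simp

lemma pathWeight_cons_eq_sum (v : V) (l : List V) :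
    pathWeight w (v :: l) =
      ∑ i : Fin l.length, w ((v :: l).get i.castSucc) ((v :: l).get i.succ) := by
  induction l generalizing v with
  | nil => simp
  | cons b l ih =>
    rw [pathWeight_cons_cons, ih]
    exact (Fin.sum_univ_succ fun i : Fin (l.length + 1) =>
      w ((v :: b :: l).get i.castSucc) ((v :: b :: l).get i.succ)).symm

end PathWeight

lemma List.getElem_length_of_getLast?_cons {v u : V} {l : List V}
    (h : (v :: l).getLast? = some u) : (v :: l)[l.length] = u := by
  rw [List.getLast?_eq_getElem?] at h
  simpa using h

section Cycle

variable {v u : V} {l : List V}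

lemma isCycle_get_cons {R : V → V → Prop} (hch : (v :: l).IsChain R) (hnd : (v :: l).Nodup)
    (hlast : (v :: l).getLast? = some u) (huv : R u v) :
    IsCycle R (fun i : Fin (l.length + 1) => (v :: l).get i) := by
  refine ⟨List.nodup_iff_injective_get.1 hnd, fun i => ?_⟩
  induction i using Fin.lastCases with
  | last =>
    rw [Fin.last_add_one]
    simpa [List.getElem_length_of_getLast?_cons hlast] using huv
  | cast i =>
    rw [Fin.coeSucc_eq_succ]
    exact hch.getElem i (by simp)

lemma sum_get_cons_eq_pathWeight_add (w : V → V → ℝ) (hlast : (v :: l).getLast? = some u) :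
    ∑ i : Fin (l.length + 1), w ((v :: l).get i) ((v :: l).get (i + 1)) =
      pathWeight w (v :: l) + w u v := by
  rw [Fin.sum_univ_castSucc, pathWeight_cons_eq_sum]
  simp [Fin.coeSucc_eq_succ, List.getElem_length_of_getLast?_cons hlast]

end Cycle

def simplePathsTo (R : V → V → Prop) (v : V) : Set (List V) :=
  {l | l.IsChain R ∧ l.Nodup ∧ l.getLast? = some v}

lemma simplePathsTo_finite [Finite V] (R : V → V → Prop) (v : V) :
    (simplePathsTo R v).Finite := by
  cases nonempty_fintype V
  exact (List.finite_length_le V (Fintype.card V)).subset fun _ hl => hl.2.1.length_le_card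

def NoNegativeCycle (R : V → V → Prop) (w : V → V → ℝ) : Prop :=
  ∀ (m : ℕ) (c : Fin (m + 1) → V), IsCycle R c → 0 ≤ ∑ i, w (c i) (c (i + 1))

namespace NoNegativeCycle

variable {R : V → V → Prop} {w : V → V → ℝ}

lemma pathWeight_add_nonneg (hcyc : NoNegativeCycle R w) {v u : V} {l : List V}
    (hch : (v :: l).IsChain R) (hnd : (v :: l).Nodup) (hlast : (v :: l).getLast? = some u)
    (huv : R u v) :
    0 ≤ pathWeight w (v :: l) + w u v :=
  sum_get_cons_eq_pathWeight_add w hlast ▸ hcyc _ _ (isCycle_get_cons hch hnd hlast huv)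

theorem exists_potential [Finite V] (hcyc : NoNegativeCycle R w) :
    ∃ p : V → ℝ, ∀ u v, R u v → p v ≤ p u + w u v := by
  have hmin v : ∃ l ∈ simplePathsTo R v, ∀ l' ∈ simplePathsTo R v,
      pathWeight w l ≤ pathWeight w l' :=
    Set.exists_min_image _ _ (simplePathsTo_finite R v) ⟨[v], by simp [simplePathsTo]⟩
  choose best hbest hle using hmin
  refine ⟨fun v => pathWeight w (best v), fun u v huv => ?_⟩
  obtain ⟨hch, hnd, hlast⟩ := hbest u
  by_cases hv : v ∈ best u
  · obtain ⟨A, B, hAB⟩ := List.append_of_mem hv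
    rw [hAB] at hch hnd hlast
    have hpre : A ++ [v] <+: A ++ v :: B := ⟨B, by simp⟩
    have hsuf : v :: B <:+ A ++ v :: B := ⟨A, rfl⟩
    have hloop := hcyc.pathWeight_add_nonneg (hch.suffix hsuf) (hnd.sublist hsuf.sublist)
      (by rwa [List.getLast?_append_cons] at hlast) huv
    have hA := hle v (A ++ [v]) ⟨hch.prefix hpre, hnd.sublist hpre.sublist, List.getLast?_concat⟩
    simp only [hAB, pathWeight_append_cons w A v B] at hA ⊢
    linarith
  · have hpath : best u ++ [v] ∈ simplePathsTo R v := by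
      refine ⟨hch.append (by simp) (by simpa [hlast] using huv), ?_, List.getLast?_concat⟩
      simpa using hnd.concat hv
    simpa [pathWeight_append_singleton w hlast] using hle v _ hpath

end NoNegativeCycle

section Semiacyclic

variable {α : Type*} [LinearOrder α]

def descentExcess (u v : α) : ℝ := (if v < u then 1 else 0) - (if u < v then 1 else 0)

lemma descentExcess_of_lt {u v : α} (h : u < v) : descentExcess u v = -1 := by
  simp [descentExcess, h, h.not_gt]

lemma descentExcess_of_gt {u v : α} (h : v < u) : descentExcess u v = 1 := by
  simp [descentExcess, h, h.not_gt]

lemma Semiacyclic.one_le_sum_descentExcess {R : α → α → Prop} (hR : Semiacyclic R) {m : ℕ}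
    {c : Fin (m + 1) → α} (hc : IsCycle R c) : 1 ≤ ∑ i, descentExcess (c i) (c (i + 1)) := by
  have hasc := hR m c hc
  rw [IsAscendingCycle, not_le, Nat.lt_iff_add_one_le] at hasc
  have hasc' := (Nat.cast_le (α := ℝ)).2 hasc
  push_cast at hasc'
  simp only [descentExcess, Finset.sum_sub_distrib, ← Finset.natCast_card_filter]
  linarith

lemma Semiacyclic.noNegativeCycle [Fintype α] {R : α → α → Prop} (hR : Semiacyclic R) {ε : ℝ}
    (hε : 0 ≤ ε) (hεcard : Fintype.card α * ε ≤ 1) :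
    NoNegativeCycle R fun u v => descentExcess u v - ε := by
  intro m c hc
  have hlen : (m + 1 : ℝ) ≤ Fintype.card α := by
    exact_mod_cast (Fintype.card_fin (m + 1)).symm.trans_le (Fintype.card_le_of_injective c hc.1)
  rw [Finset.sum_sub_distrib, Finset.sum_const, Finset.card_univ, Fintype.card_fin, nsmul_eq_mul]
  push_cast
  linarith [hR.one_le_sum_descentExcess hc, mul_le_mul_of_nonneg_right hlen hε]

lemma IsTournament.edge_iff_of_potential {R : α → α → Prop} (hR : IsTournament R) {p : α → ℝ}
    {ε : ℝ} (hε : 0 < ε) (hp : ∀ u v, R u v → p v ≤ p u + (descentExcess u v - ε))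
    {i j : α} (hij : i < j) : (R i j ↔ p j + 1 < p i) ∧ (R j i ↔ p i < p j + 1) := by
  have hasc : R i j → p j + 1 < p i := fun h => by
    linarith [hp i j h, descentExcess_of_lt hij]
  have hdesc : R j i → p i < p j + 1 := fun h => by
    linarith [hp j i h, descentExcess_of_gt hij]
  refine ⟨⟨hasc, fun h => ?_⟩, ⟨hdesc, fun h => ?_⟩⟩
  · by_contra hn
    linarith [hdesc ((hR.2 j i hij.ne').2 hn)]
  · by_contra hn
    linarith [hasc ((hR.2 i j hij.ne).2 hn)]

end Semiacyclic

section Coins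

variable {A A' B x x' : ℝ}

lemma winProb_lower_upper (h₁ : A < A') (h₂ : A' < B) (hx : 0 < x) (hx' : 0 < x') :
    winProb A B x A' B x' = x / ((1 + x) * (1 + x')) := by
  rw [winProb, if_neg (by linarith), if_neg (by linarith), if_pos h₂, if_neg (lt_irrefl B)]
  field_simp
  ring

lemma winProb_upper_lower (h₁ : A < A') (h₂ : A' < B) (hx : 0 < x) (hx' : 0 < x') :
    winProb A' B x' A B x = 1 / (1 + x) := by
  rw [winProb, if_pos h₁, if_neg (by linarith), if_pos (h₁.trans h₂), if_neg (lt_irrefl B)]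
  field_simp
  ring

lemma lowerCoin_dominates_iff (h₁ : A < A') (h₂ : A' < B) (hx : 0 < x) (hx' : 0 < x') :
    Dominates A B x A' B x' ↔ x' + 1 < x := by
  rw [Dominates, winProb_lower_upper h₁ h₂ hx hx', winProb_upper_lower h₁ h₂ hx hx',
    div_lt_div_iff₀ (by positivity) (by positivity)]
  constructor <;> intro h <;> nlinarith

lemma upperCoin_dominates_iff (h₁ : A < A') (h₂ : A' < B) (hx : 0 < x) (hx' : 0 < x') :
    Dominates A' B x' A B x ↔ x < x' + 1 := by
  rw [Dominates, winProb_lower_upper h₁ h₂ hx hx', winProb_upper_lower h₁ h₂ hx hx',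
    div_lt_div_iff₀ (by positivity) (by positivity)]
  constructor <;> intro h <;> nlinarith

end Coins

/-- Every semiacyclic tournament is the dominance graph of a set of winner coins. -/
theorem stmt7 {n : ℕ} (R : Fin n → Fin n → Prop)
    (htour : IsTournament R) (hsemi : Semiacyclic R) :
    ∃ a b x : Fin n → ℝ,
      (∀ i, a i < b i ∧ 1 < x i) ∧
      ∀ i j : Fin n, i ≠ j →
        (Dominates (a i) (b i) (x i) (a j) (b j) (x j) ↔ R i j) := by
  have hε : (0 : ℝ) < 1 / (n + 1) := by positivity
  have hεcard : Fintype.card (Fin n) * (1 / (n + 1 : ℝ)) ≤ 1 := by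
    rw [Fintype.card_fin, mul_one_div, div_le_one (by positivity)]
    linarith
  obtain ⟨p, hp⟩ := (hsemi.noNegativeCycle hε.le hεcard).exists_potential
  obtain ⟨C, hC⟩ := Finite.bddBelow_range p
  -- a shifted potential is still a potential; this shift makes every `x i` exceed 1
  set x : Fin n → ℝ := fun i => p i - C + 2
  have hx i : 1 < x i := by linarith [hC ⟨i, rfl⟩]
  have hxpot u v (h : R u v) : x v ≤ x u + (descentExcess u v - 1 / (n + 1)) := by
    linarith [hp u v h]
  have hx0 i : 0 < x i := one_pos.trans (hx i)
  refine ⟨fun i => i, fun _ => n, x, fun i => ⟨Nat.cast_lt.2 i.isLt, hx i⟩, fun i j hij => ?_⟩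
  rcases hij.lt_or_gt with h | h
  · rw [lowerCoin_dominates_iff (Nat.cast_lt.2 h) (Nat.cast_lt.2 j.isLt) (hx0 i) (hx0 j),
      (htour.edge_iff_of_potential hε hxpot h).1]
  · rw [upperCoin_dominates_iff (Nat.cast_lt.2 h) (Nat.cast_lt.2 i.isLt) (hx0 j) (hx0 i),
      (htour.edge_iff_of_potential hε hxpot h).2]
end

section
/- Let (a_i,b_i,x_i) and (a_j,b_j,x_j) be coin types with a_i ≤ b_i, a_j ≤ b_j, x_j > 0 and 0 < x_i ≤ 1. If the coin (a_i,b_i,x_i) dominates the coin (a_j,b_j,x_j), then a_i ≥ a_j. -/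
/-!
If `a_j > a_i`, the low face `a_i` of coin `i` loses to both faces of coin `j`, so coin `j`
wins with probability at least `1/(1+x_i)`, while coin `i` can only win with its high face,
i.e. with probability at most `x_i/(1+x_i)`. For `x_i ≤ 1` the second bound is below the
first, contradicting dominance.
-/

open Finset

theorem winProb_le_of_le {a b x a' b' x' : ℝ} (ha : a ≤ a') (hab' : a ≤ b')
    (hx : 0 ≤ x) (hx' : 0 ≤ x') : winProb a b x a' b' x' ≤ x / (1 + x) := by
  have hx'1 : (0 : ℝ) < 1 + x' := by linarith
  have hb_wins_le_one :
      1 / (1 + x') * (if a' < b then 1 else 0) + x' / (1 + x') * (if b' < b then 1 else 0)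
        ≤ 1 := by
    calc _ ≤ 1 / (1 + x') * 1 + x' / (1 + x') * 1 := by
          gcongr <;> split_ifs <;> norm_num
      _ = 1 := by field_simp
  calc winProb a b x a' b' x'
      = x / (1 + x) * (1 / (1 + x') * (if a' < b then 1 else 0)
          + x' / (1 + x') * (if b' < b then 1 else 0)) := by
        rw [winProb, if_neg ha.not_gt, if_neg hab'.not_gt]; ring
    _ ≤ x / (1 + x) * 1 := by gcongr
    _ = x / (1 + x) := mul_one _

theorem one_div_le_winProb {a b x a' b' x' : ℝ} (ha : a' < a) (hb : a' < b)
    (hx : 0 ≤ x) (hx' : 0 ≤ x') : 1 / (1 + x') ≤ winProb a b x a' b' x' := by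
  have hx1 : (0 : ℝ) < 1 + x := by linarith
  calc 1 / (1 + x')
      = (1 / (1 + x)) * (1 / (1 + x')) + (x / (1 + x)) * (1 / (1 + x')) := by
        field_simp
    _ ≤ winProb a b x a' b' x' := by
        rw [winProb, if_pos ha, if_pos hb]
        have h_a_beats_b' :
            0 ≤ (1 / (1 + x)) * (x' / (1 + x')) * (if b' < a then 1 else 0) := by
          split_ifs <;> positivity
        have h_b_beats_b' :
            0 ≤ (x / (1 + x)) * (x' / (1 + x')) * (if b' < b then 1 else 0) := by
          split_ifs <;> positivity
        linarith

theorem stmt9_general (ai bi xi aj bj xj : ℝ) (hj : aj ≤ bj)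
    (hxi : 0 < xi) (hxi' : xi ≤ 1) (hxj : 0 < xj)
    (hdom : Dominates ai bi xi aj bj xj) : aj ≤ ai := by
  by_contra! h
  have hi_loses := winProb_le_of_le (b := bi) h.le (h.trans_le hj).le hxi.le hxj.le
  have hj_wins := one_div_le_winProb (b' := bi) h (h.trans_le hj) hxj.le hxi.le
  have hbias : xi / (1 + xi) ≤ 1 / (1 + xi) := by gcongr
  exact lt_irrefl _ (hdom.trans_le (hi_loses.trans (hbias.trans hj_wins)))

/-- If coin `i` dominates coin `j` and coin `i` is not a winner coin,
then `a i ≥ a j`. -/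
theorem stmt9 (ai bi xi aj bj xj : ℝ) (hi : ai ≤ bi) (hj : aj ≤ bj)
    (hxi : 0 < xi) (hxi' : xi ≤ 1) (hxj : 0 < xj)
    (hdom : Dominates ai bi xi aj bj xj) : aj ≤ ai :=
  stmt9_general ai bi xi aj bj xj hj hxi hxi' hxj hdom
end

section
/- Let c_1, …, c_n be coins with types (a_i, b_i, x_i) satisfying a_i ≤ b_i and 0 < x_i ≤ 1 for all i (i.e., the set contains no winner coins), and suppose their dominance graph is a tournament T on {1,…,n}. Then T is also the dominance graph of a set of n loser coins that all have the same number on one of their sides; that is, there exist coins c'_1, …, c'_n with types (a'_i, b'_i, x'_i) satisfying a'_i < b'_i, 0 < x'_i < 1, and a'_1 = a'_2 = … = a'_n, whose dominance graph is exactly T. -/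
open Finset

/-!
Coin `(a, b, x)` dominates `(A, B, X)` iff
`0 < sign (a - A) + X sign (a - B) + x sign (b - A) + x X sign (b - B)`.
Without winner coins, a coin with the smaller low side never dominates, so the tournament is
determined by the order of the low sides together with, inside each group of equal low side,
the relation `x i⁻¹ - x j⁻¹ < sign (b i - b j)` (a constant coin counting as `x⁻¹ = ∞`).
Loser coins `(0, p i, (w i)⁻¹)` realise exactly the relation `w i - w j < sign (p i - p j)`.
So take `p = b - a + 1`, and for `w` the capped `x⁻¹` shifted by a multiple of the number of
larger low sides, large enough that a group with smaller low side gets `w` larger by more than `1`.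
-/

lemma abs_sign_le_one (r : ℝ) : |(SignType.sign r : ℝ)| ≤ 1 := by
  rcases lt_trichotomy r 0 with h | rfl | h <;> simp [sign_neg, sign_pos, *]

lemma sign_sub_eq_ite (s t : ℝ) :
    (SignType.sign (s - t) : ℝ) = (if t < s then 1 else 0) - if s < t then 1 else 0 := by
  rcases lt_trichotomy s t with h | rfl | h
  · simp [sign_neg (sub_neg.2 h), h, h.not_gt]
  · simp
  · simp [sign_pos (sub_pos.2 h), h, h.not_gt]

theorem dominates_iff_sign {a b x A B X : ℝ} (hx : 0 < x) (hX : 0 < X) :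
    Dominates a b x A B X ↔
      0 < (SignType.sign (a - A) : ℝ) + X * SignType.sign (a - B) + x * SignType.sign (b - A)
        + x * X * SignType.sign (b - B) := by
  have key : winProb a b x A B X - winProb A B X a b x =
      ((SignType.sign (a - A) : ℝ) + X * SignType.sign (a - B) + x * SignType.sign (b - A)
        + x * X * SignType.sign (b - B)) / ((1 + x) * (1 + X)) := by
    simp only [winProb, sign_sub_eq_ite]
    field_simp
    ring
  rw [Dominates, ← sub_pos, key, div_pos_iff_of_pos_right (by positivity)]

theorem dominates_iff_inv_sub_inv_lt_sign {α b x B X : ℝ} (hb : α < b) (hB : α < B)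
    (hx : 0 < x) (hX : 0 < X) :
    Dominates α b x α B X ↔ x⁻¹ - X⁻¹ < SignType.sign (b - B) := by
  rw [dominates_iff_sign hx hX, sub_self, sign_zero, sign_neg (sub_neg.2 hB),
    sign_pos (sub_pos.2 hb), inv_sub_inv hx.ne' hX.ne', div_lt_iff₀ (by positivity)]
  simp only [SignType.coe_zero, SignType.coe_one, SignType.coe_neg_one]
  constructor <;> intro h <;> linarith

theorem not_dominates_of_lt_of_le_one {a b x A B X : ℝ} (hAB : A ≤ B)
    (hx : 0 < x) (hx1 : x ≤ 1) (hX : 0 < X) (haA : a < A) : ¬ Dominates a b x A B X := by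
  rw [dominates_iff_sign hx hX, sign_neg (sub_neg.2 haA), sign_neg (by linarith : a - B < 0)]
  have h1 := (abs_le.1 (abs_sign_le_one (b - A))).2
  have h2 := (abs_le.1 (abs_sign_le_one (b - B))).2
  simp only [SignType.coe_neg_one]
  nlinarith [mul_pos hx hX]

theorem not_dominates_of_const {α x B X : ℝ} (hB : α ≤ B) (hx : 0 < x) (hX : 0 < X) :
    ¬ Dominates α α x α B X := by
  have hs : (SignType.sign (α - B) : ℝ) ≤ 0 := by
    rcases hB.lt_or_eq with h | rfl
    · simp [sign_neg (sub_neg.2 h)]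
    · simp
  rw [dominates_iff_sign hx hX, sub_self, sign_zero]
  simp only [SignType.coe_zero]
  nlinarith [mul_pos hx hX]

theorem dominates_const {α b x X : ℝ} (hb : α < b) (hx : 0 < x) (hX : 0 < X) :
    Dominates α b x α α X := by
  rw [dominates_iff_sign hx hX, sub_self, sign_zero, sign_pos (sub_pos.2 hb)]
  simp only [SignType.coe_zero, SignType.coe_one]
  nlinarith [mul_pos hx hX]

/-- A coin showing `a` on both sides behaves like a coin with `x⁻¹ = ∞`; on coins with
`x⁻¹ ≤ M` the value `M + 1` stands in for `∞`. -/
noncomputable def cappedInvOdds (M a b x : ℝ) : ℝ := if a < b then x⁻¹ else M + 1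

lemma cappedInvOdds_mem_Ioc {M a b x : ℝ} (hx : 0 < x) (hxM : x⁻¹ ≤ M) :
    cappedInvOdds M a b x ∈ Set.Ioc 0 (M + 1) := by
  have := inv_pos.2 hx
  unfold cappedInvOdds
  split_ifs <;> constructor <;> linarith

theorem dominates_iff_cappedInvOdds_sub_lt_sign {M α b x B X : ℝ} (hb : α ≤ b) (hB : α ≤ B)
    (hx : 0 < x) (hX : 0 < X) (hxM : x⁻¹ ≤ M) (hXM : X⁻¹ ≤ M) :
    Dominates α b x α B X ↔
      cappedInvOdds M α b x - cappedInvOdds M α B X < SignType.sign (b - B) := by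
  rcases hb.lt_or_eq with hb | rfl <;> rcases hB.lt_or_eq with hB | rfl
  · simp only [cappedInvOdds, if_pos hb, if_pos hB]
    exact dominates_iff_inv_sub_inv_lt_sign hb hB hx hX
  · simp only [cappedInvOdds, if_pos hb, lt_irrefl, if_false, sign_pos (sub_pos.2 hb),
      SignType.coe_one]
    exact iff_of_true (dominates_const hb hx hX) (by linarith)
  · simp only [cappedInvOdds, if_pos hB, lt_irrefl, if_false, sign_neg (sub_neg.2 hB),
      SignType.coe_neg_one]
    exact iff_of_false (not_dominates_of_const hB.le hx hX) (by linarith [inv_pos.2 hX])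
  · simp only [cappedInvOdds, lt_irrefl, if_false, sub_self, sign_zero, SignType.coe_zero]
    exact iff_of_false (not_dominates_of_const le_rfl hx hX) not_false

theorem card_filter_lt_lt_card_filter_lt {ι α : Type*} [Fintype ι] [LinearOrder α] {f : ι → α}
    {i j : ι} (h : f i < f j) : #{k | f j < f k} < #{k | f i < f k} := by
  refine card_lt_card ⟨fun k hk => ?_, fun hsub => ?_⟩
  · simp only [mem_filter, mem_univ, true_and] at hk ⊢
    exact h.trans hk
  · have := hsub (by simpa using h)
    simp at this

theorem exists_weight_separating {ι : Type*} [Fintype ι] (a v : ι → ℝ) (K : ℝ)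
    (hv : ∀ i, v i ∈ Set.Ioc 0 K) :
    ∃ w : ι → ℝ, (∀ i, 1 < w i) ∧ (∀ i j, a i < a j → w j + 1 < w i) ∧
      ∀ i j, a i = a j → w i - w j = v i - v j := by
  classical
  refine ⟨fun i => v i + 1 + (K + 1) * #{k | a i < a k}, fun i => ?_, fun i j h => ?_,
    fun i j h => by simp only [h]; ring⟩
  · obtain ⟨hv0, hvK⟩ := hv i
    have := mul_nonneg (by linarith : 0 ≤ K + 1) (#{k | a i < a k}).cast_nonneg
    linarith
  · have hcard : (#{k | a j < a k} : ℝ) + 1 ≤ #{k | a i < a k} := by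
      exact_mod_cast card_filter_lt_lt_card_filter_lt h
    obtain ⟨hvj0, hvjK⟩ := hv j
    have := mul_le_mul_of_nonneg_left hcard (by linarith : 0 ≤ K + 1)
    dsimp only
    linarith [(hv i).1]

/-- If a set of coins contains no winner coins and its dominance graph is a
tournament, then this tournament is also the dominance graph of a set of loser
coins that all have the same number on one of their sides. -/
theorem stmt12 {n : ℕ} (a b x : Fin n → ℝ)
    (hcoin : ∀ i, a i ≤ b i ∧ 0 < x i ∧ x i ≤ 1)
    (htour : IsTournament
      (fun i j : Fin n => Dominates (a i) (b i) (x i) (a j) (b j) (x j))) :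
    ∃ a' b' x' : Fin n → ℝ,
      (∀ i, a' i < b' i ∧ 0 < x' i ∧ x' i < 1) ∧
      (∀ i j : Fin n, a' i = a' j) ∧
      ∀ i j : Fin n,
        (Dominates (a' i) (b' i) (x' i) (a' j) (b' j) (x' j) ↔
          Dominates (a i) (b i) (x i) (a j) (b j) (x j)) := by
  choose hab hx hx1 using hcoin
  set M := ∑ i, (x i)⁻¹
  have hxM i : (x i)⁻¹ ≤ M := single_le_sum (fun j _ => (inv_pos.2 (hx j)).le) (mem_univ i)
  obtain ⟨w, hw1, hw_gap, hw_eq⟩ := exists_weight_separating a _ (M + 1)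
    fun i => cappedInvOdds_mem_Ioc (a := a i) (b := b i) (hx i) (hxM i)
  have hw i : 0 < (w i)⁻¹ := inv_pos.2 (one_pos.trans (hw1 i))
  have hp i : 0 < b i - a i + 1 := by linarith [hab i]
  refine ⟨fun _ => 0, fun i => b i - a i + 1, fun i => (w i)⁻¹,
    fun i => ⟨hp i, hw i, inv_lt_one_of_one_lt₀ (hw1 i)⟩, fun _ _ => rfl, fun i j => ?_⟩
  rw [dominates_iff_inv_sub_inv_lt_sign (hp i) (hp j) (hw i) (hw j), inv_inv, inv_inv]
  have hsign := abs_le.1 (abs_sign_le_one (b i - a i + 1 - (b j - a j + 1)))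
  rcases lt_trichotomy (a i) (a j) with h | h | h
  · exact iff_of_false (by linarith [hw_gap i j h])
      (not_dominates_of_lt_of_le_one (hab j) (hx i) (hx1 i) (hx j) h)
  · rw [hw_eq i j h, show b i - a i + 1 - (b j - a j + 1) = b i - b j by rw [h]; ring, ← h,
      dominates_iff_cappedInvOdds_sub_lt_sign (hab i) (h ▸ hab j) (hx i) (hx j) (hxM i) (hxM j)]
  · exact iff_of_true (by linarith [hw_gap j i h]) <| (htour.2 i j (ne_of_apply_ne a h.ne')).2
      (not_dominates_of_lt_of_le_one (hab i) (hx j) (hx1 j) (hx i) h)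
end

section
/- Let T₁ and T₂ be tournaments on finite sets V₁ and V₂ such that neither T₁ nor T₂ can be made semiacyclic: for each k ∈ {1,2}, there is no bijection σ : V_k → {1,…,|V_k|} such that the tournament on {1,…,|V_k|} with σ(u)→σ(v) whenever u→v in T_k is semiacyclic. Then the direct product T₁×T₂ is not the dominance graph of any system of coins: there is no family of coins (c_w)_{w ∈ V₁×V₂} such that for all distinct w, w' ∈ V₁×V₂, coin c_w dominates coin c_{w'} if and only if w → w' in T₁×T₂. -/
open Finset

/-!
Order coins lexicographically by their type `(a, b, x)`. Call a coin heavy if `a < b` and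
`x > 1`. Along a directed cycle of dominations among coins that are not heavy, the low face `a`
never increases, so it is constant; then every coin on the cycle has `a < b`, and `1/x` rises by
more than `1` at each ascent and falls by less than `1` at each descent. Summing around the cycle
gives fewer ascents than descents, so the type order makes such a tournament semiacyclic. Among
heavy coins the same works with the high face `b` in place of `a` and the potential `-x`.

In `T₁ × T₂`, either some fibre `{u} × V₂` contains no heavy coin, and its coins make `T₂`
semiacyclic, or every fibre contains one, and choosing one per fibre makes `T₁` semiacyclic.
-/

@[ext]
structure Coin where
  a : ℝ
  b : ℝ
  x : ℝ
  a_le_b : a ≤ b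
  x_pos : 0 < x

namespace Coin

def Dominates (c c' : Coin) : Prop :=
  _root_.Dominates c.a c.b c.x c'.a c'.b c'.x

def IsHeavy (c : Coin) : Prop :=
  c.a < c.b ∧ 1 < c.x

def key (c : Coin) : ℝ ×ₗ ℝ ×ₗ ℝ :=
  toLex (c.a, toLex (c.b, c.x))

variable {c c' : Coin}

theorem key_lt_key : c.key < c'.key ↔ TypeLt c.a c.b c.x c'.a c'.b c'.x := by
  simp only [key, Prod.Lex.toLex_lt_toLex, TypeLt, and_or_left]

theorem key_injective : Function.Injective key := by
  intro c c' h
  simp only [key, toLex_inj, Prod.mk.injEq] at h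
  exact Coin.ext h.1 h.2.1 h.2.2

theorem winProb_eq (c c' : Coin) :
    winProb c.a c.b c.x c'.a c'.b c'.x =
      ((if c'.a < c.a then 1 else 0) + c'.x * (if c'.b < c.a then 1 else 0)
        + c.x * (if c'.a < c.b then 1 else 0) + c.x * c'.x * (if c'.b < c.b then 1 else 0))
      / ((1 + c.x) * (1 + c'.x)) := by
  have := c.x_pos
  have := c'.x_pos
  unfold winProb
  field_simp

theorem dominates_iff :
    c.Dominates c' ↔
      (if c.a < c'.a then 1 else 0) + c.x * (if c.b < c'.a then 1 else 0)
        + c'.x * (if c.a < c'.b then 1 else 0) + c.x * c'.x * (if c.b < c'.b then 1 else 0)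
      < (if c'.a < c.a then 1 else 0) + c'.x * (if c'.b < c.a then 1 else 0)
        + c.x * (if c'.a < c.b then 1 else 0) + c.x * c'.x * (if c'.b < c.b then 1 else 0) := by
  have := c.x_pos
  have := c'.x_pos
  rw [Dominates, _root_.Dominates, winProb_eq, winProb_eq, mul_comm (1 + c'.x),
    div_lt_div_iff_of_pos_right (by positivity), mul_comm c'.x c.x]

theorem Dominates.ne (h : c.Dominates c') : c ≠ c' := by
  rintro rfl
  exact lt_irrefl _ h

theorem Dominates.a_lt_b (h : c.Dominates c') : c'.a < c.b := by
  by_contra! hba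
  rw [dominates_iff] at h
  have := c.a_le_b; have := c'.a_le_b; have := c.x_pos; have := c'.x_pos
  split_ifs at h <;> first | linarith | nlinarith

theorem Dominates.one_lt_x_of_a_lt (h : c.Dominates c') (ha : c.a < c'.a) : 1 < c.x := by
  have := h.a_lt_b
  rw [dominates_iff] at h
  have := c.a_le_b; have := c'.a_le_b; have := c.x_pos; have := c'.x_pos
  split_ifs at h <;> first | linarith | nlinarith

theorem Dominates.x_lt_x_of_a_eq_of_b_eq (h : c.Dominates c') (ha : c.a = c'.a)
    (hb : c.b = c'.b) : c'.x < c.x := by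
  have := h.a_lt_b
  rw [dominates_iff] at h
  have := c.a_le_b; have := c'.a_le_b
  split_ifs at h <;> linarith

theorem Dominates.inv_x_add_one_lt_of_b_lt (h : c.Dominates c') (ha : c.a = c'.a)
    (hb : c.b < c'.b) : c.x⁻¹ + 1 < c'.x⁻¹ := by
  have := h.a_lt_b
  have hx := c.x_pos
  have hx' := c'.x_pos
  have hcleared : c'.x * (1 + c.x) < c.x := by
    rw [dominates_iff] at h
    have := c.a_le_b; have := c'.a_le_b
    split_ifs at h <;> linarith
  rw [← one_div, ← one_div, div_add_one hx.ne', div_lt_div_iff₀ hx hx']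
  linarith

theorem Dominates.inv_x_sub_one_lt_of_b_gt (h : c.Dominates c') (ha : c.a = c'.a)
    (hc' : c'.a < c'.b) (hb : c'.b < c.b) : c.x⁻¹ - 1 < c'.x⁻¹ := by
  have hx := c.x_pos
  have hx' := c'.x_pos
  have hcleared : c'.x < c.x * (1 + c'.x) := by
    rw [dominates_iff] at h
    have := c.a_le_b
    split_ifs at h <;> linarith
  rw [← one_div, ← one_div, div_sub_one hx.ne', div_lt_div_iff₀ hx hx']
  linarith

theorem Dominates.b_le_b_of_one_lt_x (h : c.Dominates c') (hx : 1 < c'.x) : c'.b ≤ c.b := by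
  by_contra! hbb
  rw [dominates_iff] at h
  have := c.a_le_b; have := c'.a_le_b; have := c.x_pos
  split_ifs at h <;> first | linarith | nlinarith

theorem Dominates.one_add_x_lt_x_of_a_lt (h : c.Dominates c') (hb : c.b = c'.b)
    (ha : c.a < c'.a) : 1 + c'.x < c.x := by
  rw [dominates_iff] at h
  have := c.a_le_b; have := c'.a_le_b; have := c.x_pos; have := c'.x_pos
  split_ifs at h <;> linarith

theorem Dominates.x_lt_one_add_x_of_a_gt (h : c.Dominates c') (hb : c.b = c'.b)
    (hc : c.a < c.b) (ha : c'.a < c.a) : c'.x < 1 + c.x := by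
  rw [dominates_iff] at h
  have := c'.a_le_b; have := c.x_pos; have := c'.x_pos
  split_ifs at h <;> linarith

end Coin

theorem Fin.add_one_eq_of_forall_add_one_le {M : Type*} [AddCommMonoid M] [PartialOrder M]
    [IsOrderedCancelAddMonoid M] {m : ℕ} (h : Fin (m + 1) → M) (hle : ∀ i, h (i + 1) ≤ h i)
    (i : Fin (m + 1)) : h (i + 1) = h i :=
  (Finset.sum_eq_sum_iff_of_le fun i _ => hle i).1
    (Fintype.sum_equiv (Equiv.addRight 1) _ _ fun _ => rfl) i (mem_univ i)

theorem not_isAscendingCycle_of_potential_s16 {α : Type*} [LinearOrder α] {m : ℕ}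
    {c : Fin (m + 1) → α} (g : Fin (m + 1) → ℝ) (hne : ∀ i, c i ≠ c (i + 1))
    (hup : ∀ i, c i < c (i + 1) → g i + 1 < g (i + 1))
    (hdown : ∀ i, c (i + 1) < c i → g i - 1 < g (i + 1)) : ¬ IsAscendingCycle c := by
  intro hasc
  have hstep : ∀ i, ((if c i < c (i + 1) then 1 else 0) - if c (i + 1) < c i then 1 else 0)
      < g (i + 1) - g i := by
    intro i
    rcases (hne i).lt_or_gt with hlt | hlt
    · simp only [hlt, hlt.not_gt, if_true, if_false]
      linarith [hup i hlt]
    · simp only [hlt, hlt.not_gt, if_true, if_false]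
      linarith [hdown i hlt]
  -- the increments of `g` telescope to `0` around the cycle
  have hsum := Finset.sum_lt_sum_of_nonempty univ_nonempty fun i _ => hstep i
  rw [Finset.sum_sub_distrib, Finset.sum_sub_distrib, Finset.sum_boole, Finset.sum_boole,
    Fintype.sum_equiv (Equiv.addRight 1) (fun i => g (i + 1)) g fun _ => rfl, sub_self,
    sub_neg] at hsum
  exact hsum.not_ge (by exact_mod_cast hasc)

theorem Semiacyclic.exists_numbering {V : Type*} [Fintype V] [LinearOrder V]
    {R : V → V → Prop} (h : Semiacyclic R) :
    ∃ e : V ≃ Fin (Fintype.card V), Semiacyclic (fun i j => R (e.symm i) (e.symm j)) := by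
  let E := monoEquivOfFin V rfl
  refine ⟨E.symm.toEquiv, fun m c hc hasc => h m (E ∘ c) ⟨E.injective.comp hc.1, hc.2⟩ ?_⟩
  simpa [IsAscendingCycle, E.lt_iff_lt] using hasc

section CoinSystem

variable {V : Type*} {R : V → V → Prop} {coin : V → Coin}

theorem IsTournament.injective_key (ht : IsTournament R)
    (hdom : ∀ u v, R u v → (coin u).Dominates (coin v)) :
    Function.Injective fun v => (coin v).key := by
  intro u v huv
  by_contra hne
  have hcoin := Coin.key_injective huv
  by_cases hvu : R v u
  · exact (hdom v u hvu).ne hcoin.symm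
  · exact (hdom u v ((ht.2 u v hne).2 hvu)).ne hcoin

variable [LinearOrder V]

theorem semiacyclic_of_not_isHeavy (hkey : StrictMono fun v => (coin v).key)
    (hdom : ∀ u v, R u v → (coin u).Dominates (coin v)) (hlight : ∀ v, ¬ (coin v).IsHeavy) :
    Semiacyclic R := by
  intro m c hc
  have hd i : (coin (c i)).Dominates (coin (c (i + 1))) := hdom _ _ (hc.2 i)
  have ha : ∀ i, (coin (c (i + 1))).a = (coin (c i)).a :=
    Fin.add_one_eq_of_forall_add_one_le (fun i => (coin (c i)).a) fun i => not_lt.1 fun hlt =>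
      hlight _ ⟨hlt.trans (hd i).a_lt_b, (hd i).one_lt_x_of_a_lt hlt⟩
  have hproper i : (coin (c i)).a < (coin (c i)).b := ha i ▸ (hd i).a_lt_b
  refine not_isAscendingCycle_of_potential_s16 (fun i => (coin (c i)).x⁻¹)
    (fun i h => (hd i).ne (congrArg coin h)) (fun i hlt => ?_) (fun i hlt => ?_)
  · rcases Coin.key_lt_key.1 (hkey hlt) with h | ⟨-, hb⟩ | ⟨-, hb, hx⟩
    · exact absurd (ha i) h.ne'
    · exact (hd i).inv_x_add_one_lt_of_b_lt (ha i).symm hb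
    · exact absurd ((hd i).x_lt_x_of_a_eq_of_b_eq (ha i).symm hb) hx.not_gt
  · rcases Coin.key_lt_key.1 (hkey hlt) with h | ⟨-, hb⟩ | ⟨-, hb, hx⟩
    · exact absurd (ha i) h.ne
    · exact (hd i).inv_x_sub_one_lt_of_b_gt (ha i).symm (hproper _) hb
    · linarith [inv_strictAnti₀ (coin (c (i + 1))).x_pos hx]

theorem semiacyclic_of_isHeavy (hkey : StrictMono fun v => (coin v).key)
    (hdom : ∀ u v, R u v → (coin u).Dominates (coin v)) (hheavy : ∀ v, (coin v).IsHeavy) :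
    Semiacyclic R := by
  intro m c hc
  have hd i : (coin (c i)).Dominates (coin (c (i + 1))) := hdom _ _ (hc.2 i)
  have hb : ∀ i, (coin (c (i + 1))).b = (coin (c i)).b :=
    Fin.add_one_eq_of_forall_add_one_le (fun i => (coin (c i)).b) fun i =>
      (hd i).b_le_b_of_one_lt_x (hheavy _).2
  refine not_isAscendingCycle_of_potential_s16 (fun i => -(coin (c i)).x)
    (fun i h => (hd i).ne (congrArg coin h)) (fun i hlt => ?_) (fun i hlt => ?_)
  · rcases Coin.key_lt_key.1 (hkey hlt) with ha | ⟨-, hb'⟩ | ⟨ha, hb', hx⟩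
    · linarith [(hd i).one_add_x_lt_x_of_a_lt (hb i).symm ha]
    · exact absurd (hb i).symm hb'.ne
    · linarith [(hd i).x_lt_x_of_a_eq_of_b_eq ha hb']
  · rcases Coin.key_lt_key.1 (hkey hlt) with ha | ⟨-, hb'⟩ | ⟨-, -, hx⟩
    · linarith [(hd i).x_lt_one_add_x_of_a_gt (hb i).symm (hheavy _).1 ha]
    · exact absurd (hb i) hb'.ne
    · linarith

end CoinSystem

/-- If neither `T₁` nor `T₂` can be numbered so as to become semiacyclic, then
`T₁ × T₂` is not the dominance graph of any system of coins. -/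
theorem stmt16 {V₁ V₂ : Type*} [Fintype V₁] [Fintype V₂]
    (R₁ : V₁ → V₁ → Prop) (R₂ : V₂ → V₂ → Prop)
    (ht₁ : IsTournament R₁) (ht₂ : IsTournament R₂)
    (h₁ : ¬ ∃ e : V₁ ≃ Fin (Fintype.card V₁),
      Semiacyclic (fun i j => R₁ (e.symm i) (e.symm j)))
    (h₂ : ¬ ∃ e : V₂ ≃ Fin (Fintype.card V₂),
      Semiacyclic (fun i j => R₂ (e.symm i) (e.symm j))) :
    ¬ ∃ a b x : V₁ × V₂ → ℝ,
      (∀ w, a w ≤ b w ∧ 0 < x w) ∧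
      ∀ w w' : V₁ × V₂, w ≠ w' →
        (Dominates (a w) (b w) (x w) (a w') (b w') (x w') ↔
          TournProd R₁ R₂ w w') := by
  rintro ⟨a, b, x, hcoin, hdom⟩
  let coin w : Coin := ⟨a w, b w, x w, (hcoin w).1, (hcoin w).2⟩
  have hprod w w' (h : TournProd R₁ R₂ w w') : (coin w).Dominates (coin w') := by
    refine (hdom w w' ?_).2 h
    rintro rfl
    rcases h with h | ⟨-, h⟩
    exacts [ht₁.1 _ h, ht₂.1 _ h]
  by_cases hheavy : ∀ u, ∃ v, (coin (u, v)).IsHeavy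
  · choose t ht using hheavy
    have hR u u' (h : R₁ u u') : (coin (u, t u)).Dominates (coin (u', t u')) :=
      hprod _ _ (Or.inl h)
    let _ := LinearOrder.lift' _ (ht₁.injective_key hR)
    exact h₁ (semiacyclic_of_isHeavy (fun _ _ h => h) hR ht).exists_numbering
  · push Not at hheavy
    obtain ⟨u, hu⟩ := hheavy
    have hR v v' (h : R₂ v v') : (coin (u, v)).Dominates (coin (u, v')) :=
      hprod _ _ (Or.inr ⟨rfl, h⟩)
    let _ := LinearOrder.lift' _ (ht₂.injective_key hR)
    exact h₂ (semiacyclic_of_not_isHeavy (fun _ _ h => h) hR hu).exists_numbering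
end
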